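/- There exists a temporal fair division instance with n = 2 agents such that no allocation of M is simultaneously EF1 per day and SD-EF1 overall. In particular, this holds for the instance with eight goods arriving over three days as M_1 = {g_1,g_5,g_7}, M_2 = {g_2,g_4,g_6}, M_3 = {g_3,g_8}, where agent 1's values for g_1,...,g_8 are 8,7,6,5,4,3,2,1 and agent 2's values for g_1,...,g_8 are 6,8,7,5,2,4,1,3. -/

import Mathlib

open Finset
open scoped Classical

noncomputable section

/-- Total value of a bundle `X` under additive valuation `v`. -/
def totalVal {G : Type*} (v : G → ℝ) (X : Finset G) : ℝ := ∑ g ∈ X, v g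

/-- `A` is an allocation of the set of goods `S` among `n` agents. -/
def IsAlloc {G : Type*} (n : ℕ) (S : Finset G) (A : Fin n → Finset G) : Prop :=
  (∀ i j : Fin n, i ≠ j → Disjoint (A i) (A j)) ∧ Finset.univ.biUnion A = S

/-- The allocation `A` is EF1 (envy-free up to one good). -/
def EF1 {G : Type*} [DecidableEq G] (n : ℕ) (v : Fin n → G → ℝ)
    (A : Fin n → Finset G) : Prop :=
  ∀ i j : Fin n, A j ≠ ∅ → ∃ g ∈ A j, totalVal (v i) ((A j).erase g) ≤ totalVal (v i) (A i)

/-- The top-set `H_i(S,g) = {g' ∈ S : v g' ≥ v g}`. -/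
def topSet {G : Type*} (v : G → ℝ) (S : Finset G) (g : G) : Finset G :=
  S.filter (fun g' => v g ≤ v g')

/-- Stochastic dominance: `X ≽^SD Y` w.r.t. valuation `v` over the set of goods `S`. -/
def SDge {G : Type*} [DecidableEq G] (v : G → ℝ) (S X Y : Finset G) : Prop :=
  ∀ g ∈ S, (Y ∩ topSet v S g).card ≤ (X ∩ topSet v S g).card

/-- The allocation `A` of goods `S` is SD-EF1. -/
def SDEF1 {G : Type*} [DecidableEq G] (n : ℕ) (v : Fin n → G → ℝ) (S : Finset G)
    (A : Fin n → Finset G) : Prop :=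
  ∀ i j : Fin n, A j ≠ ∅ → ∃ g ∈ A j, SDge (v i) S (A i) ((A j).erase g)

/-- Goods `g_1, …, g_8` are encoded as `0, …, 7 : Fin 8`.
The days are `M_1 = {g_1, g_5, g_7}`, `M_2 = {g_2, g_4, g_6}`, `M_3 = {g_3, g_8}`. -/
def M6 : Fin 3 → Finset (Fin 8) := ![{0, 4, 6}, {1, 3, 5}, {2, 7}]

/-- Agent 1's values for `g_1, …, g_8` are `8,7,6,5,4,3,2,1` and agent 2's values are
`6,8,7,5,2,4,1,3`. -/
def v6 : Fin 2 → Fin 8 → ℝ := ![![8, 7, 6, 5, 4, 3, 2, 1], ![6, 8, 7, 5, 2, 4, 1, 3]]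

/-!
Per day, EF1 forces a `1`–`2` split of each three-good day and a `1`–`1` split of the last
day, while SD-EF1 overall (tested on the whole set of goods) forces `4`–`4` bundles; so each
agent is the singleton holder on exactly one of the first two days, and that good is not the
holder's least valued good of the day. In each of the few remaining cases some agent finds
the other's bundle ahead of her own by two goods on one of her top sets. Since the valuations
are integers, this case analysis is a finite computation, left to the kernel over the `2 ^ 8`
possible bundles of the first agent.
-/

section

variable {G : Type*}

theorem IsAlloc.eq_sdiff_of_two [DecidableEq G] {S : Finset G} {A : Fin 2 → Finset G}
    (hA : IsAlloc 2 S A) :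
    A = ![A 0, S \ A 0] := by
  obtain ⟨hdisj, hcover⟩ := hA
  have hS : S = A 0 ∪ A 1 := by
    rw [← hcover]
    ext x
    simp [Fin.exists_fin_two]
  funext i
  fin_cases i
  · rfl
  · simp [hS, union_sdiff_left, sdiff_eq_self_of_disjoint (hdisj 1 0 (by decide))]

theorem totalVal_natCast (w : G → ℕ) (X : Finset G) :
    totalVal (fun g => (w g : ℝ)) X = ((∑ g ∈ X, w g : ℕ) : ℝ) := by
  simp [totalVal]

theorem ef1_natCast_iff [DecidableEq G] {n : ℕ} (w : Fin n → G → ℕ) (A : Fin n → Finset G) :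
    EF1 n (fun i g => (w i g : ℝ)) A ↔
      ∀ i j, A j ≠ ∅ → ∃ g ∈ A j, ∑ x ∈ (A j).erase g, w i x ≤ ∑ x ∈ A i, w i x := by
  simp only [EF1, totalVal_natCast, Nat.cast_le]

theorem topSet_natCast (w : G → ℕ) (S : Finset G) (g : G) :
    topSet (fun g => (w g : ℝ)) S g = S.filter (fun x => w g ≤ w x) := by
  simp only [topSet, Nat.cast_le]

theorem sdef1_natCast_iff [DecidableEq G] {n : ℕ} (w : Fin n → G → ℕ) (S : Finset G)
    (A : Fin n → Finset G) :
    SDEF1 n (fun i g => (w i g : ℝ)) S A ↔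
      ∀ i j, A j ≠ ∅ → ∃ g ∈ A j, ∀ g' ∈ S,
        ((A j).erase g ∩ S.filter (fun x => w i g' ≤ w i x)).card ≤
          (A i ∩ S.filter (fun x => w i g' ≤ w i x)).card := by
  simp only [SDEF1, SDge, topSet_natCast]

end

def w6 : Fin 2 → Fin 8 → ℕ := ![![8, 7, 6, 5, 4, 3, 2, 1], ![6, 8, 7, 5, 2, 4, 1, 3]]

theorem v6_eq_natCast_w6 : v6 = fun i g => (w6 i g : ℝ) := by
  funext i g
  fin_cases i <;> fin_cases g <;> norm_num [v6, w6]

theorem biUnion_M6 : univ.biUnion M6 = univ := by decide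

set_option maxRecDepth 10000 in
theorem not_ef1_perDay_and_sdef1_of_pair (B : Finset (Fin 8)) :
    ¬ ((∀ t : Fin 3, EF1 2 v6 (fun i => ![B, univ \ B] i ∩ M6 t)) ∧
        SDEF1 2 v6 univ ![B, univ \ B]) := by
  simp only [v6_eq_natCast_w6, ef1_natCast_iff, sdef1_natCast_iff]
  revert B
  decide

/-- In the temporal fair division instance with two agents, valuations
`v6`, and days `M6`, no allocation is simultaneously EF1 per day and SD-EF1 overall. -/
theorem no_ef1_perDay_and_sdef1_overall :
    ∀ A : Fin 2 → Finset (Fin 8),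
      IsAlloc 2 (Finset.univ.biUnion M6) A →
      ¬ ((∀ t : Fin 3, EF1 2 v6 (fun i => A i ∩ M6 t)) ∧
          SDEF1 2 v6 (Finset.univ.biUnion M6) A) := by
  intro A hA
  rw [biUnion_M6] at hA ⊢
  rw [hA.eq_sdiff_of_two]
  exact not_ef1_perDay_and_sdef1_of_pair (A 0)
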